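/- arXiv:2603.28257 — 2 statements merged into one kernel-verified Lean document; each statement's English description precedes it below -/
import Mathlib

section
/- (Ky Fan maximum principle) Let Σ be a real symmetric N×N matrix with eigenvalues λ_1 ≥ ⋯ ≥ λ_N. For any matrix A ∈ ℝ^{k×N} with orthonormal rows (A Aᵀ = I_k), trace(A Σ Aᵀ) ≤ λ_1 + ⋯ + λ_k, and equality holds when the rows of A are the top-k orthonormal eigenvectors of Σ. -/
/-!
With `B = A U`, the trace `tr (A S Aᵀ) = tr (B (diag λ) Bᵀ)` is the weighted sum `∑ⱼ cⱼ λⱼ` whose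
weights `cⱼ` form the diagonal of the orthogonal projection `Bᵀ B`; hence `0 ≤ cⱼ ≤ 1` and
`∑ⱼ cⱼ = tr (B Bᵀ) = k`. For any threshold `t` separating the `k` largest eigenvalues from the
others, `cⱼ (λⱼ - t) ≤ [j < k] (λⱼ - t)` termwise, and summing gives the bound. The first `k`
columns of `U` turn `S` into the top-left `k × k` block of `diag λ`, which attains it.
-/

open Matrix Finset

theorem Fin.filter_val_lt_eq_map_castLEEmb {N k : ℕ} (hk : k ≤ N) :
    univ.filter (fun i : Fin N => (i : ℕ) < k) = univ.map (Fin.castLEEmb hk) := by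
  ext i
  simp only [mem_filter, mem_univ, true_and, mem_map, Fin.castLEEmb_apply, Fin.ext_iff,
    Fin.val_castLE]
  exact ⟨fun h => ⟨⟨i, h⟩, rfl⟩, fun ⟨j, hj⟩ => hj ▸ j.2⟩

theorem Antitone.exists_threshold {N : ℕ} {lam : Fin N → ℝ} (h : Antitone lam) (k : ℕ) :
    ∃ t, (∀ i : Fin N, (i : ℕ) < k → t ≤ lam i) ∧ ∀ i : Fin N, k ≤ (i : ℕ) → lam i ≤ t := by
  by_cases hkN : k < N
  · exact ⟨lam ⟨k, hkN⟩, fun i hi => h (Fin.le_def.2 hi.le), fun i hi => h (Fin.le_def.2 hi)⟩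
  · obtain ⟨t, ht⟩ := (Set.finite_range lam).bddBelow
    exact ⟨t, fun i _ => ht ⟨i, rfl⟩, fun i hi => absurd i.2 (by omega)⟩

theorem Finset.sum_mul_le_sum_of_threshold {ι : Type*} [Fintype ι] (s : Finset ι)
    (lam c : ι → ℝ) (t : ℝ) (hs : ∀ i ∈ s, t ≤ lam i) (hsc : ∀ i ∉ s, lam i ≤ t)
    (hc0 : ∀ i, 0 ≤ c i) (hc1 : ∀ i, c i ≤ 1) (hsum : ∑ i, c i = #s) :
    ∑ i, c i * lam i ≤ ∑ i ∈ s, lam i := by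
  classical
  have hin : ∑ i ∈ s, c i * (lam i - t) ≤ ∑ i ∈ s, (lam i - t) :=
    sum_le_sum fun i hi => mul_le_of_le_one_left (sub_nonneg.2 (hs i hi)) (hc1 i)
  have hout : ∑ i ∈ sᶜ, c i * (lam i - t) ≤ 0 :=
    sum_nonpos fun i hi =>
      mul_nonpos_of_nonneg_of_nonpos (hc0 i) (sub_nonpos.2 (hsc i (mem_compl.1 hi)))
  have hsplit := sum_add_sum_compl s fun i => c i * (lam i - t)
  simp only [mul_sub, sum_sub_distrib, ← sum_mul, hsum, sum_const, nsmul_eq_mul]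
    at hsplit hin hout
  linarith

theorem Matrix.diag_le_one_of_isSymm_of_mul_self_eq {n : Type*} [Fintype n]
    {P : Matrix n n ℝ} (hsymm : P.IsSymm) (hidem : P * P = P) (j : n) : P j j ≤ 1 := by
  have hsq : P j j ^ 2 ≤ P j j :=
    calc P j j ^ 2 ≤ ∑ i, P i j ^ 2 :=
          single_le_sum (f := fun i => P i j ^ 2) (fun i _ => sq_nonneg _) (mem_univ j)
      _ = P j j := by
        conv_rhs => rw [← hidem]
        simp only [mul_apply, sq]
        exact sum_congr rfl fun i _ => by rw [hsymm.apply j i]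
  nlinarith

theorem Matrix.trace_mul_diagonal_mul_transpose {R m n : Type*} [CommSemiring R] [Fintype m]
    [Fintype n] [DecidableEq n] (B : Matrix m n R) (d : n → R) :
    trace (B * diagonal d * Bᵀ) = ∑ j, (Bᵀ * B) j j * d j := by
  rw [trace_mul_cycle, trace_mul_comm]
  simp [trace, mul_comm]

theorem Matrix.trace_mul_diagonal_mul_transpose_le {N k : ℕ} (hk : k ≤ N) {lam : Fin N → ℝ}
    (hmono : Antitone lam) (B : Matrix (Fin k) (Fin N) ℝ) (hB : B * Bᵀ = 1) :
    trace (B * diagonal lam * Bᵀ) ≤ ∑ i ∈ univ.filter (fun i : Fin N => (i : ℕ) < k), lam i := by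
  obtain ⟨t, htop, hbot⟩ := hmono.exists_threshold k
  have hidem : Bᵀ * B * (Bᵀ * B) = Bᵀ * B := by
    rw [Matrix.mul_assoc, ← Matrix.mul_assoc B, hB, Matrix.one_mul]
  have htrace : ∑ j, (Bᵀ * B) j j = #(univ.filter fun i : Fin N => (i : ℕ) < k) := by
    change trace (Bᵀ * B) = _
    rw [Fin.card_filter_val_lt, min_eq_right hk, trace_mul_comm, hB, trace_one, Fintype.card_fin]
  have hsymm : (Bᵀ * B).IsSymm := by rw [IsSymm, transpose_mul, transpose_transpose]
  rw [trace_mul_diagonal_mul_transpose]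
  refine sum_mul_le_sum_of_threshold _ _ _ t (by simpa using htop) (by simpa using hbot)
    (fun j => by simpa using (posSemidef_conjTranspose_mul_self B).diag_nonneg (i := j))
    (diag_le_one_of_isSymm_of_mul_self_eq hsymm hidem) htrace

theorem Matrix.transpose_submatrix_mul_mul_submatrix {R l n : Type*} [Semiring R] [Fintype n]
    (U S : Matrix n n R) (e : l → n) :
    (U.submatrix id e)ᵀ * S * U.submatrix id e = (Uᵀ * S * U).submatrix e e := by
  rw [transpose_submatrix, submatrix_mul _ _ _ id _ Function.bijective_id,
    submatrix_mul _ _ _ id _ Function.bijective_id, submatrix_id_id]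

theorem ky_fan_maximum_principle_general (N k : ℕ) (hk : k ≤ N)
    (S U : Matrix (Fin N) (Fin N) ℝ) (lam : Fin N → ℝ)
    (horth : Uᵀ * U = 1) (hmono : Antitone lam)
    (hspec : S = U * Matrix.diagonal lam * Uᵀ) :
    (∀ A : Matrix (Fin k) (Fin N) ℝ, A * Aᵀ = 1 →
        Matrix.trace (A * S * Aᵀ) ≤
          ∑ i ∈ Finset.univ.filter (fun i : Fin N => (i : ℕ) < k), lam i) ∧
      Matrix.trace ((U.submatrix id (Fin.castLE hk))ᵀ * S * (U.submatrix id (Fin.castLE hk))) =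
        ∑ i ∈ Finset.univ.filter (fun i : Fin N => (i : ℕ) < k), lam i := by
  have hUUt : U * Uᵀ = 1 := mul_eq_one_comm.mp horth
  have hdiag : Uᵀ * S * U = diagonal lam := by
    rw [hspec]
    simp only [← Matrix.mul_assoc, horth, Matrix.one_mul]
    rw [Matrix.mul_assoc, horth, Matrix.mul_one]
  refine ⟨fun A hA => ?_, ?_⟩
  · have hAU : A * U * (A * U)ᵀ = 1 := by
      rw [transpose_mul, Matrix.mul_assoc, ← Matrix.mul_assoc U, hUUt, Matrix.one_mul, hA]
    have hconj : A * S * Aᵀ = A * U * diagonal lam * (A * U)ᵀ := by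
      rw [hspec, transpose_mul]
      simp only [Matrix.mul_assoc]
    rw [hconj]
    exact trace_mul_diagonal_mul_transpose_le hk hmono _ hAU
  · rw [transpose_submatrix_mul_mul_submatrix, hdiag,
      submatrix_diagonal _ _ (Fin.castLE_injective hk), trace_diagonal,
      Fin.filter_val_lt_eq_map_castLEEmb hk, sum_map]
    rfl

theorem ky_fan_maximum_principle (N k : ℕ) (hk : k ≤ N)
    (S U : Matrix (Fin N) (Fin N) ℝ) (lam : Fin N → ℝ)
    (hsym : S.IsSymm) (horth : Uᵀ * U = 1) (hmono : Antitone lam)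
    (hspec : S = U * Matrix.diagonal lam * Uᵀ) :
    (∀ A : Matrix (Fin k) (Fin N) ℝ, A * Aᵀ = 1 →
        Matrix.trace (A * S * Aᵀ) ≤
          ∑ i ∈ Finset.univ.filter (fun i : Fin N => (i : ℕ) < k), lam i) ∧
      Matrix.trace ((U.submatrix id (Fin.castLE hk))ᵀ * S * (U.submatrix id (Fin.castLE hk))) =
        ∑ i ∈ Finset.univ.filter (fun i : Fin N => (i : ℕ) < k), lam i :=
  ky_fan_maximum_principle_general N k hk S U lam horth hmono hspec
end

section
/- For fixed A ∈ ℝ^{k×N} with A Σ Aᵀ invertible, the matrix W* = Σ Aᵀ (A Σ Aᵀ)⁻¹ minimizes W ↦ trace((I − W A) Σ (I − W A)ᵀ) over all W ∈ ℝ^{N×k}, i.e. the loss at W* is at most the loss at any W. -/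
open Matrix

theorem optimal_decoder (N k : ℕ)
    (S : Matrix (Fin N) (Fin N) ℝ) (hpsd : S.PosSemidef)
    (A : Matrix (Fin k) (Fin N) ℝ) (hinv : IsUnit (A * S * Aᵀ)) :
    ∀ W : Matrix (Fin N) (Fin k) ℝ,
      Matrix.trace ((1 - (S * Aᵀ * (A * S * Aᵀ)⁻¹) * A) * S *
          (1 - (S * Aᵀ * (A * S * Aᵀ)⁻¹) * A)ᵀ) ≤
        Matrix.trace ((1 - W * A) * S * (1 - W * A)ᵀ) := by
  intro W
  set W₀ : Matrix (Fin N) (Fin k) ℝ := S * Aᵀ * (A * S * Aᵀ)⁻¹ with hW₀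
  set X : Matrix (Fin N) (Fin N) ℝ := 1 - W₀ * A with hX
  set D : Matrix (Fin N) (Fin k) ℝ := W - W₀ with hD
  have hdet : IsUnit (A * S * Aᵀ).det := (Matrix.isUnit_iff_isUnit_det _).mp hinv
  have hS : Sᵀ = S := hpsd.1
  -- key: X * S * Aᵀ = 0
  have hkey : X * S * Aᵀ = 0 := by
    have : W₀ * (A * S * Aᵀ) = S * Aᵀ := by
      rw [hW₀, Matrix.mul_assoc, Matrix.nonsing_inv_mul _ hdet, Matrix.mul_one]
    rw [hX, Matrix.sub_mul, Matrix.sub_mul, Matrix.one_mul,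
      show W₀ * A * S * Aᵀ = W₀ * (A * S * Aᵀ) by simp [Matrix.mul_assoc], this, sub_self]
  have hexp : (1 : Matrix (Fin N) (Fin N) ℝ) - W * A = X - D * A := by
    rw [hX, hD, Matrix.sub_mul]; abel
  have hcross1 : X * S * (D * A)ᵀ = 0 := by
    rw [Matrix.transpose_mul, ← Matrix.mul_assoc, hkey, Matrix.zero_mul]
  have hcross2 : (D * A) * S * Xᵀ = 0 := by
    have := congrArg Matrix.transpose hcross1
    simpa [Matrix.transpose_mul, hS, Matrix.mul_assoc] using this
  have hpsdB : (D * (A * S * Aᵀ) * Dᵀ).PosSemidef := by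
    have h1 : (A * S * Aᵀ).PosSemidef := by
      have := hpsd.mul_mul_conjTranspose_same A
      simpa using this
    have := h1.mul_mul_conjTranspose_same D
    simpa using this
  have hDpart : (D * A) * S * (D * A)ᵀ = D * (A * S * Aᵀ) * Dᵀ := by
    rw [Matrix.transpose_mul]
    simp [Matrix.mul_assoc]
  have hrw : (1 - W * A) * S * (1 - W * A)ᵀ
      = X * S * Xᵀ + D * (A * S * Aᵀ) * Dᵀ := by
    rw [hexp, Matrix.transpose_sub]
    simp only [Matrix.sub_mul, Matrix.mul_sub, hcross1, hcross2, hDpart]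
    abel
  rw [hrw, Matrix.trace_add]
  have hdiag : ∀ i, 0 ≤ (D * (A * S * Aᵀ) * Dᵀ) i i := fun i => by
    exact hpsdB.diag_nonneg
  have htr : 0 ≤ (D * (A * S * Aᵀ) * Dᵀ).trace :=
    Finset.sum_nonneg fun i _ => hdiag i
  linarith
end
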